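/- Let H be a Hilbert space, T a bounded operator on H, and let ν(T) := inf{‖Tv‖ : ‖v‖ = 1} be the lower norm. For finite subsets of indices, the truncated lower norm commutes with ultralimits: if T is a bounded operator on ℓ²(X), ω an ultrafilter on I, F = [F_i] a finite subset of X^ω with #F_i = #F for ω-almost all i, and T^ω the induced operator, then ν(T^ω P_F) = lim_{i→ω} ν(T P_{F_i}). -/

import Mathlib

/-!
On the indices where `x · i` enumerates `F i` injectively, `ν(T P_{F i})` is the minimum over the
unit sphere of `ℓ²(Fin n)` of `a ↦ ‖T (∑ k, a k • δ_{x k i})‖`, and these functions are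
`‖T‖ n`-Lipschitz uniformly in `i`. Minima of equi-Lipschitz functions on a compact set pass to
the pointwise ultralimit: the minimisers `m i` of `g i` converge along `ω` to some `a`,
and `|g i (m i) - g i a| ≤ C · dist (m i) a` makes `a` a minimiser of the limit function.
-/

noncomputable section
open scoped ENNReal
open Filter

/-- The Hilbert space ℓ²(X). -/
abbrev L2 (X : Type*) := lp (fun _ : X => ℂ) 2

/-- The Dirac function δ_x ∈ ℓ²(X). -/
noncomputable def dirac {X : Type*} (x : X) : L2 X := by
  classical exact lp.single 2 x 1

/-- The lower norm of T truncated to the subspace ℓ²(Y) ⊆ ℓ²(X):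
ν(T P_Y) = inf{‖Tf‖ : ‖f‖ = 1, supp f ⊆ Y}. -/
noncomputable def lowNormOn {X : Type*} (T : L2 X →L[ℂ] L2 X) (Y : Set X) : ℝ :=
  sInf {r : ℝ | ∃ f : L2 X, ‖f‖ = 1 ∧ (∀ x ∉ Y, f x = 0) ∧ r = ‖T f‖}

open Topology
open scoped NNReal

theorem IsCompact.exists_tendsto_of_forall_mem {X I : Type*} [TopologicalSpace X] {K : Set X}
    (hK : IsCompact K) (ω : Ultrafilter I) {u : I → X} (hu : ∀ i, u i ∈ K) :
    ∃ x ∈ K, Tendsto u ω (𝓝 x) :=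
  hK.ultrafilter_le_nhds' (ω.map u) (Ultrafilter.mem_map.2 (univ_mem' hu))

theorem setOf_exists_tendsto_eq_image {α β I : Type*} [TopologicalSpace β] [T2Space β]
    {l : Filter I} [l.NeBot] {u : α → I → β} {g : α → β} (hg : ∀ a, Tendsto (u a) l (𝓝 (g a)))
    (K : Set α) : {r | ∃ a ∈ K, Tendsto (u a) l (𝓝 r)} = g '' K := by
  ext r
  exact ⟨fun ⟨a, ha, hr⟩ => ⟨a, ha, tendsto_nhds_unique (hg a) hr⟩,
    fun ⟨a, ha, hr⟩ => ⟨a, ha, hr ▸ hg a⟩⟩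

theorem tendsto_sInf_image_of_lipschitzOnWith {α I : Type*} [PseudoMetricSpace α] {K : Set α}
    (hK : IsCompact K) {ω : Ultrafilter I} {C : ℝ≥0} {g : I → α → ℝ} {g₀ : α → ℝ}
    (hlip : ∀ i, LipschitzOnWith C (g i) K) (hg : ∀ a ∈ K, Tendsto (g · a) ω (𝓝 (g₀ a))) :
    Tendsto (fun i => sInf (g i '' K)) ω (𝓝 (sInf (g₀ '' K))) := by
  rcases K.eq_empty_or_nonempty with rfl | hne
  · simp
  choose m hmK hmin using fun i => hK.exists_isMinOn hne (hlip i).continuousOn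
  obtain ⟨a, haK, hma⟩ := hK.exists_tendsto_of_forall_mem ω hmK
  have hinf : ∀ i, sInf (g i '' K) = g i (m i) := fun i =>
    ((hmin i).isGLB (hmK i)).csInf_eq (hne.image _)
  have hmin_tendsto : Tendsto (fun i => g i (m i)) ω (𝓝 (g₀ a)) := by
    refine (hg a haK).congr_dist (squeeze_zero (fun _ => dist_nonneg)
      (fun i => (hlip i).dist_le_mul a haK (m i) (hmK i)) ?_)
    simpa using ((tendsto_const_nhds (x := a)).dist hma).const_mul (C : ℝ)
  have hleast : IsLeast (g₀ '' K) (g₀ a) :=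
    ⟨Set.mem_image_of_mem g₀ haK, Set.forall_mem_image.2 fun b hb =>
      le_of_tendsto_of_tendsto' hmin_tendsto (hg b hb) fun i => hmin i hb⟩
  simpa [hinf, hleast.csInf_eq] using hmin_tendsto

def l2UnitSphere (ι : Type*) [Fintype ι] : Set (ι → ℂ) := {a | ∑ k, ‖a k‖ ^ 2 = 1}

theorem isCompact_l2UnitSphere {ι : Type*} [Fintype ι] : IsCompact (l2UnitSphere ι) := by
  refine (isCompact_closedBall (0 : ι → ℂ) 1).of_isClosed_subset
    (isClosed_eq (by fun_prop) continuous_const) fun a ha => ?_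
  rw [mem_closedBall_zero_iff, pi_norm_le_iff_of_nonneg zero_le_one]
  intro k
  have hk : ‖a k‖ ^ 2 ≤ 1 :=
    ha ▸ Finset.single_le_sum (fun j _ => sq_nonneg ‖a j‖) (Finset.mem_univ k)
  exact (sq_le_one_iff₀ (norm_nonneg _)).1 hk

section Dirac

variable {X ι : Type*}

theorem dirac_eq_hilbertBasis (x : X) : dirac x = (default : HilbertBasis X ℂ (L2 X)) x := by
  classical
  rw [← HilbertBasis.repr_symm_single]
  rfl

theorem norm_dirac (x : X) : ‖dirac x‖ = 1 := by
  rw [dirac_eq_hilbertBasis]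
  exact (HilbertBasis.orthonormal _).1 x

theorem dirac_apply (x y : X) [Decidable (y = x)] : dirac x y = if y = x then 1 else 0 := by
  classical
  unfold dirac
  rw [lp.single_apply, Pi.single_apply]
  congr

theorem orthonormal_dirac_comp {e : ι → X} (he : Function.Injective e) :
    Orthonormal ℂ fun k => dirac (e k) := by
  simp_rw [dirac_eq_hilbertBasis]
  exact (HilbertBasis.orthonormal _).comp e he

variable [Fintype ι]

def diracCombination (e : ι → X) (a : ι → ℂ) : L2 X := ∑ k, a k • dirac (e k)

theorem diracCombination_sub (e : ι → X) (a b : ι → ℂ) :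
    diracCombination e (a - b) = diracCombination e a - diracCombination e b := by
  simp [diracCombination, sub_smul]

theorem norm_diracCombination_sq {e : ι → X} (he : Function.Injective e) (a : ι → ℂ) :
    ‖diracCombination e a‖ ^ 2 = ∑ k, ‖a k‖ ^ 2 := by
  rw [@norm_sq_eq_re_inner ℂ, diracCombination, (orthonormal_dirac_comp he).inner_sum]
  simp only [RCLike.conj_mul, Complex.coe_algebraMap, map_sum, RCLike.re_to_complex]
  norm_cast

theorem norm_diracCombination_eq_one_iff {e : ι → X} (he : Function.Injective e) (a : ι → ℂ) :
    ‖diracCombination e a‖ = 1 ↔ a ∈ l2UnitSphere ι := by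
  rw [l2UnitSphere, Set.mem_ofPred_eq, ← norm_diracCombination_sq he,
    pow_eq_one_iff_of_nonneg (norm_nonneg _) two_ne_zero]

theorem norm_diracCombination_le (e : ι → X) (a : ι → ℂ) :
    ‖diracCombination e a‖ ≤ ∑ k, ‖a k‖ :=
  (norm_sum_le _ _).trans_eq (by simp [norm_smul, norm_dirac])

theorem diracCombination_apply (e : ι → X) (a : ι → ℂ) (y : X) :
    diracCombination e a y = ∑ k, a k * dirac (e k) y := by
  rw [diracCombination, lp.coeFn_sum, Finset.sum_apply]
  rfl

theorem diracCombination_apply_of_notMem {e : ι → X} {y : X} (hy : y ∉ Set.range e)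
    (a : ι → ℂ) : diracCombination e a y = 0 := by
  classical
  simp only [diracCombination_apply, dirac_apply]
  exact Finset.sum_eq_zero fun k _ => by simp [show y ≠ e k from fun h => hy ⟨k, h.symm⟩]

theorem diracCombination_apply_self {e : ι → X} (he : Function.Injective e) (a : ι → ℂ)
    (k : ι) : diracCombination e a (e k) = a k := by
  classical
  simp [diracCombination_apply, dirac_apply, he.eq_iff]

theorem diracCombination_comp_eq {e : ι → X} (he : Function.Injective e) {f : L2 X}
    (hf : ∀ y ∉ Set.range e, f y = 0) : diracCombination e (fun k => f (e k)) = f := by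
  ext y
  by_cases hy : y ∈ Set.range e
  · obtain ⟨k, rfl⟩ := hy
    exact diracCombination_apply_self he _ k
  · rw [diracCombination_apply_of_notMem hy, hf y hy]

variable (T : L2 X →L[ℂ] L2 X)

theorem lowNormOn_range {e : ι → X} (he : Function.Injective e) :
    lowNormOn T (Set.range e) =
      sInf ((fun a => ‖T (diracCombination e a)‖) '' l2UnitSphere ι) := by
  unfold lowNormOn
  congr 1
  ext r
  constructor
  · rintro ⟨f, hf, hsupp, rfl⟩
    refine ⟨fun k => f (e k), ?_, by simp only [diracCombination_comp_eq he hsupp]⟩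
    rwa [← norm_diracCombination_eq_one_iff he, diracCombination_comp_eq he hsupp]
  · rintro ⟨a, ha, rfl⟩
    exact ⟨diracCombination e a, (norm_diracCombination_eq_one_iff he a).2 ha,
      fun y hy => diracCombination_apply_of_notMem hy a, rfl⟩

theorem norm_apply_diracCombination_le (e : ι → X) (a : ι → ℂ) :
    ‖T (diracCombination e a)‖ ≤ ‖T‖ * ∑ k, ‖a k‖ :=
  (T.le_opNorm _).trans (mul_le_mul_of_nonneg_left (norm_diracCombination_le e a) (norm_nonneg T))

theorem lipschitzWith_norm_apply_diracCombination (e : ι → X) :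
    LipschitzWith (‖T‖₊ * Fintype.card ι) fun a => ‖T (diracCombination e a)‖ := by
  refine LipschitzWith.of_dist_le_mul fun a b => ?_
  calc dist ‖T (diracCombination e a)‖ ‖T (diracCombination e b)‖
      ≤ ‖T (diracCombination e (a - b))‖ := by
        rw [diracCombination_sub, map_sub]
        exact dist_norm_norm_le _ _
    _ ≤ ‖T‖ * ∑ k, ‖a k - b k‖ := norm_apply_diracCombination_le T e (a - b)
    _ ≤ ‖T‖ * (Fintype.card ι * dist a b) := by
        gcongr
        have h := Finset.sum_le_card_nsmul Finset.univ (fun k => ‖a k - b k‖) (dist a b)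
          fun k _ => dist_eq_norm a b ▸ norm_le_pi_norm (a - b) k
        rwa [Finset.card_univ, nsmul_eq_mul] at h
    _ = _ := by push_cast; ring

end Dirac

theorem lowNorm_commutes_with_ultralimit_general {X I : Type*} (T : L2 X →L[ℂ] L2 X)
    (ω : Ultrafilter I) (F : I → Set X) (n : ℕ) (x : Fin n → I → X)
    (henum : ∀ᶠ i in (ω : Filter I), F i = Set.range fun k => x k i)
    (hinj : ∀ᶠ i in (ω : Filter I), Function.Injective fun k => x k i) :
    Filter.Tendsto (fun i => lowNormOn T (F i)) (ω : Filter I)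
      (nhds (sInf {r : ℝ | ∃ a : Fin n → ℂ, (∑ k : Fin n, ‖a k‖ ^ 2) = 1 ∧
        Filter.Tendsto (fun i => ‖T (∑ k : Fin n, a k • dirac (x k i))‖)
          (ω : Filter I) (nhds r)})) := by
  have hlim (a : Fin n → ℂ) :
      ∃ r, Tendsto (fun i => ‖T (diracCombination (fun k => x k i) a)‖) ω (𝓝 r) :=
    let ⟨r, _, hr⟩ := isCompact_Icc.exists_tendsto_of_forall_mem ω fun i =>
      ⟨norm_nonneg _, norm_apply_diracCombination_le T _ a⟩
    ⟨r, hr⟩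
  choose g₀ hg₀ using hlim
  have hinf_tendsto := tendsto_sInf_image_of_lipschitzOnWith isCompact_l2UnitSphere
    (fun i => (lipschitzWith_norm_apply_diracCombination T fun k => x k i).lipschitzOnWith)
    fun a _ => hg₀ a
  rw [← setOf_exists_tendsto_eq_image hg₀] at hinf_tendsto
  refine hinf_tendsto.congr' ?_
  filter_upwards [henum, hinj] with i hFi hinj_i
  rw [hFi, lowNormOn_range T hinj_i]

/-- The finitely truncated lower norm commutes with ultralimits:
for a finite subset F = [F_i] of X^ω of ω-a.e. constant cardinality n, enumerated by
germs x_1, …, x_n, the lower norm of T^ω P_F (computed on vectors ∑ a_k δ_{[x_k]} of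
norm one, where ‖T^ω ∑ a_k δ_{[x_k]}‖ is the ω-limit of ‖T ∑ a_k δ_{x_k(i)}‖) is the
ω-limit of the truncated lower norms ν(T P_{F_i}). -/
theorem lowNorm_commutes_with_ultralimit {X I : Type*} (T : L2 X →L[ℂ] L2 X)
    (ω : Ultrafilter I) (F : I → Set X) (hF : ∀ i, (F i).Finite)
    (n : ℕ) (x : Fin n → I → X)
    (henum : ∀ᶠ i in (ω : Filter I), F i = Set.range fun k => x k i)
    (hinj : ∀ᶠ i in (ω : Filter I), Function.Injective fun k => x k i) :
    Filter.Tendsto (fun i => lowNormOn T (F i)) (ω : Filter I)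
      (nhds (sInf {r : ℝ | ∃ a : Fin n → ℂ, (∑ k : Fin n, ‖a k‖ ^ 2) = 1 ∧
        Filter.Tendsto (fun i => ‖T (∑ k : Fin n, a k • dirac (x k i))‖)
          (ω : Filter I) (nhds r)})) :=
  lowNorm_commutes_with_ultralimit_general T ω F n x henum hinj
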